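/- Let G be a finite simple graph containing a vertex v that is adjacent to every other vertex of G (so the single vertex v dominates G). Then for any two dominating multisets D_s and D_t of G with |D_s| = |D_t|, the multiset D_t is TS-reachable from D_s. -/

import Mathlib

/-- A multiset `D` of vertices dominates `G`: every vertex occurs in `D`
or is adjacent to a vertex occurring in `D`. -/
def IsDominatingMultiset {V : Type*} (G : SimpleGraph V) (D : Multiset V) : Prop :=
  ∀ w : V, w ∈ D ∨ ∃ u ∈ D, G.Adj u w

/-- A token slide along an edge `uv`: remove one copy of `u`, add one copy of `v`. -/
def TokenSlide {V : Type*} [DecidableEq V] (G : SimpleGraph V) (D D' : Multiset V) : Prop :=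
  ∃ u v : V, G.Adj u v ∧ u ∈ D ∧ D' = v ::ₘ D.erase u

/-- One step of token-sliding reconfiguration between dominating multisets. -/
def TSStep {V : Type*} [DecidableEq V] (G : SimpleGraph V) (D D' : Multiset V) : Prop :=
  IsDominatingMultiset G D ∧ IsDominatingMultiset G D' ∧ TokenSlide G D D'

/-- `D'` is TS-reachable from `D`: there is a finite sequence of dominating multisets
from `D` to `D'` in which each multiset is obtained from the previous one by a token slide. -/
def TSReachable {V : Type*} [DecidableEq V] (G : SimpleGraph V) (D D' : Multiset V) : Prop :=
  Relation.ReflTransGen (TSStep G) D D'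

/-! Slide the tokens not on the universal vertex `v` onto `v` one at a time: every intermediate
multiset contains `v` and hence dominates. So both `Ds` and `Dt` reach the multiset with all
tokens on `v`, and token slides are reversible. -/

lemma TSStep.symm {V : Type*} [DecidableEq V] {G : SimpleGraph V} {D D' : Multiset V}
    (h : TSStep G D D') : TSStep G D' D := by
  obtain ⟨hD, hD', u, w, huw, hu, rfl⟩ := h
  refine ⟨hD', hD, w, u, huw.symm, Multiset.mem_cons_self _ _, ?_⟩
  rw [Multiset.erase_cons_head, Multiset.cons_erase hu]

lemma TSReachable.symm {V : Type*} [DecidableEq V] {G : SimpleGraph V} {D D' : Multiset V}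
    (h : TSReachable G D D') : TSReachable G D' D :=
  have : Std.Symm (TSStep G) := ⟨fun _ _ => TSStep.symm⟩
  Std.Symm.symm (r := Relation.ReflTransGen (TSStep G)) _ _ h

section UniversalVertex

variable {V : Type*} [DecidableEq V] {G : SimpleGraph V} {v : V}

lemma isDominatingMultiset_of_mem (hv : ∀ w : V, w ≠ v → G.Adj v w) {D : Multiset V}
    (hvD : v ∈ D) : IsDominatingMultiset G D := fun w =>
  if hw : w = v then .inl (hw ▸ hvD) else .inr ⟨v, hvD, hv w hw⟩

lemma tsStep_cons_erase (hv : ∀ w : V, w ≠ v → G.Adj v w) {D : Multiset V}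
    (hD : IsDominatingMultiset G D) {u : V} (hu : u ∈ D) (huv : u ≠ v) :
    TSStep G D (v ::ₘ D.erase u) :=
  ⟨hD, isDominatingMultiset_of_mem hv (Multiset.mem_cons_self _ _),
    u, v, (hv u huv).symm, hu, rfl⟩

theorem tsReachable_replicate_of_adj (hv : ∀ w : V, w ≠ v → G.Adj v w) (D : Multiset V)
    (hD : IsDominatingMultiset G D) :
    TSReachable G D (Multiset.replicate (Multiset.card D) v) := by
  by_cases hall : ∀ u ∈ D, u = v
  · rw [← Multiset.eq_replicate_card.2 hall]
    exact .refl
  · push Not at hall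
    obtain ⟨u, hu, huv⟩ := hall
    have hstep := tsStep_cons_erase hv hD hu huv
    have hcard : Multiset.card (v ::ₘ D.erase u) = Multiset.card D := by
      rw [Multiset.card_cons, Multiset.card_erase_add_one hu]
    have hrest := tsReachable_replicate_of_adj hv _ hstep.2.1
    rw [hcard] at hrest
    exact .head hstep hrest
termination_by Multiset.card D - Multiset.count v D
decreasing_by
  have hlt : Multiset.count v D < Multiset.card D :=
    (Multiset.count_le_card v D).lt_of_ne fun h => huv (Multiset.count_eq_card.1 h u hu).symm
  rw [hcard, Multiset.count_cons_self, Multiset.count_erase_of_ne huv.symm]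
  omega

end UniversalVertex

theorem universal_vertex_TSReachable_general {V : Type*} [DecidableEq V]
    (G : SimpleGraph V) (v : V) (hv : ∀ w : V, w ≠ v → G.Adj v w)
    (Ds Dt : Multiset V)
    (hDs : IsDominatingMultiset G Ds) (hDt : IsDominatingMultiset G Dt)
    (hcard : Multiset.card Ds = Multiset.card Dt) :
    TSReachable G Ds Dt := by
  have hs := tsReachable_replicate_of_adj hv Ds hDs
  have ht := tsReachable_replicate_of_adj hv Dt hDt
  rw [hcard] at hs
  exact hs.trans ht.symm

/-- If `G` has a vertex adjacent to every other vertex, then any two dominating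
multisets of `G` of the same size are TS-reachable from one another. -/
theorem universal_vertex_TSReachable {V : Type*} [Fintype V] [DecidableEq V]
    (G : SimpleGraph V) (v : V) (hv : ∀ w : V, w ≠ v → G.Adj v w)
    (Ds Dt : Multiset V)
    (hDs : IsDominatingMultiset G Ds) (hDt : IsDominatingMultiset G Dt)
    (hcard : Multiset.card Ds = Multiset.card Dt) :
    TSReachable G Ds Dt :=
  universal_vertex_TSReachable_general G v hv Ds Dt hDs hDt hcard
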